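/- Let C₁, C₂, θ > 0 and let y be a continuous function on [0,T) such that y(t) ≥ y(0) + ∫₀ᵗ (C₂ y(τ)^{1+θ} − C₁) dτ for all t ∈ [0,T). If α := C₂ y(0)^{1+θ} − C₁ > 0, then T is finite; in fact T ≤ y(0)/(αθ). -/
import Mathlib


open Real Set
open Topology Filter

/-- Bound on the existence time: under the integral inequality
with `α := C₂ y(0)^(1+θ) − C₁ > 0`, necessarily `T ≤ y(0)/(αθ)`. -/
theorem stmt4 (T C₁ C₂ θ α : ℝ) (hC₁ : 0 < C₁) (hC₂ : 0 < C₂) (hθ : 0 < θ)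
    (y : ℝ → ℝ) (hy0 : 0 < y 0)
    (hcont : ContinuousOn y (Ico 0 T))
    (hineq : ∀ t ∈ Ico (0:ℝ) T,
      y 0 + ∫ τ in (0:ℝ)..t, (C₂ * y τ ^ (1 + θ) - C₁) ≤ y t)
    (hα : α = C₂ * y 0 ^ (1 + θ) - C₁) (hαpos : 0 < α) :
    T ≤ y 0 / (α * θ) := by
  rcases le_or_gt T (y 0 / (α * θ)) with h | h
  · exact h
  exfalso
  have hbpos : 0 < y 0 / (α * θ) := div_pos hy0 (mul_pos hαpos hθ)
  set t₁ := (y 0 / (α * θ) + T) / 2 with ht₁def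
  have hT0 : 0 < T := lt_trans hbpos h
  have ht₁pos : 0 < t₁ := by rw [ht₁def]; linarith
  have ht₁mem : t₁ ∈ Ico (0:ℝ) T := ⟨ht₁pos.le, by rw [ht₁def]; linarith⟩
  have ht₁gt : y 0 / (α * θ) < t₁ := by rw [ht₁def]; linarith
  clear_value t₁
  -- setup
  set p := 1 + θ with hp_def
  clear_value p
  have hp : (0:ℝ) < p := by rw [hp_def]; linarith
  set g : ℝ → ℝ := fun u => C₂ * y u ^ p - C₁ with hg_def
  clear_value g
  have hgcont : ContinuousOn g (Ico 0 T) := by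
    rw [hg_def]
    apply ContinuousOn.sub _ continuousOn_const
    exact continuousOn_const.mul (fun x hx => (hcont x hx).rpow_const (Or.inr hp.le))
  have hsub : Icc (0:ℝ) t₁ ⊆ Ico 0 T := fun u hu => ⟨hu.1, lt_of_le_of_lt hu.2 ht₁mem.2⟩
  have hgt1 : ContinuousOn g (Icc 0 t₁) := hgcont.mono hsub
  have hgi : ∀ s ∈ Icc (0:ℝ) t₁, IntervalIntegrable g MeasureTheory.volume 0 s := by
    intro s hs
    apply (hgt1.mono ?_).intervalIntegrable
    rw [uIcc_of_le hs.1]; exact Icc_subset_Icc le_rfl hs.2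
  have hgα : ∀ u, y 0 ≤ y u → α ≤ g u := by
    intro u hu
    have h1 : y 0 ^ p ≤ y u ^ p := Real.rpow_le_rpow hy0.le hu hp.le
    simp only [hg_def, hα]
    nlinarith
  have hineq' : ∀ t ∈ Ico (0:ℝ) T, y 0 + ∫ τ in (0:ℝ)..t, g τ ≤ y t := hineq
  -- Claim 1 : y ≥ y 0 on [0, t₁]
  have claim1 : ∀ u ∈ Icc (0:ℝ) t₁, y 0 ≤ y u := by
    set B := {s : ℝ | s ∈ Icc (0:ℝ) t₁ ∧ ∀ u ∈ Icc (0:ℝ) s, y 0 ≤ y u} with hB_def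
    have hB0 : (0:ℝ) ∈ B := by
      refine ⟨⟨le_refl 0, ht₁pos.le⟩, fun u hu => ?_⟩
      have : u = 0 := le_antisymm hu.2 hu.1
      simp [this]
    have hBne : B.Nonempty := ⟨0, hB0⟩
    have hBbdd : BddAbove B := ⟨t₁, fun s hs => hs.1.2⟩
    set b := sSup B with hb_def
    clear_value b
    have hb0 : 0 ≤ b := by rw [hb_def]; exact le_csSup hBbdd hB0
    have hbt₁ : b ≤ t₁ := by rw [hb_def]; exact csSup_le hBne (fun s hs => hs.1.2)
    have hlt : ∀ u, 0 ≤ u → u < b → y 0 ≤ y u := by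
      intro u hu hub
      rw [hb_def] at hub
      obtain ⟨s, hs, hus⟩ := exists_lt_of_lt_csSup hBne hub
      exact hs.2 u ⟨hu, hus.le⟩
    have hyb : y 0 ≤ y b := by
      rcases eq_or_lt_of_le hb0 with h0 | h0
      · simp [← h0]
      · have hcb : ContinuousWithinAt y (Ico 0 b) b :=
          ((hcont b (hsub ⟨hb0, hbt₁⟩)).mono
            (fun u hu => hsub ⟨hu.1, le_trans hu.2.le hbt₁⟩))
        have hne : (𝓝[Ico (0:ℝ) b] b).NeBot := by
          rw [← mem_closure_iff_nhdsWithin_neBot, closure_Ico h0.ne]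
          exact ⟨hb0, le_rfl⟩
        exact ge_of_tendsto hcb (eventually_nhdsWithin_of_forall
          (fun u hu => hlt u hu.1 hu.2))
    have hbB : b ∈ B := by
      refine ⟨⟨hb0, hbt₁⟩, fun u hu => ?_⟩
      rcases lt_or_eq_of_le hu.2 with h' | h'
      · exact hlt u hu.1 h'
      · rw [h']; exact hyb
    have hbeq : b = t₁ := by
      by_contra hne
      have hblt : b < t₁ := lt_of_le_of_ne hbt₁ hne
      have hgb : α ≤ g b := hgα b hyb
      have hgc : ContinuousWithinAt g (Icc b t₁) b :=
        (hgt1 b ⟨hb0, hbt₁⟩).mono (Icc_subset_Icc hb0 le_rfl)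
      have hev : ∀ᶠ u in 𝓝[Icc b t₁] b, α/2 < g u :=
        hgc.eventually (lt_mem_nhds (show α/2 < g b by linarith))
      obtain ⟨U, hUopen, hbU, hU⟩ := mem_nhdsWithin.mp hev
      obtain ⟨ε, hε, hball⟩ := Metric.isOpen_iff.mp hUopen b hbU
      set s := min (b + ε/2) t₁ with hs_def
      clear_value s
      have hbs : b < s := by rw [hs_def]; exact lt_min (show b < b + ε/2 by linarith) hblt
      have hst₁ : s ≤ t₁ := by rw [hs_def]; exact min_le_right _ _
      have hIccsub : Icc b s ⊆ {u | α/2 < g u} := by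
        intro u hu
        apply hU
        constructor
        · apply hball
          rw [Metric.mem_ball, Real.dist_eq, abs_lt]
          constructor
          · linarith [hu.1]
          · have := hu.2
            have : u ≤ b + ε/2 := le_trans this (by rw [hs_def]; exact min_le_left _ _)
            linarith
        · exact ⟨hu.1, le_trans hu.2 hst₁⟩
      have hsB : s ∈ B := by
        refine ⟨⟨le_trans hb0 hbs.le, hst₁⟩, fun u hu => ?_⟩
        rcases le_or_gt u b with h' | h'
        · exact hbB.2 u ⟨hu.1, h'⟩
        · -- b < u ≤ s
          have hu0 : 0 ≤ u := hu.1
          have hut₁ : u ≤ t₁ := le_trans hu.2 hst₁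
          have hiu : IntervalIntegrable g MeasureTheory.volume 0 u := hgi u ⟨hu0, hut₁⟩
          have hib : IntervalIntegrable g MeasureTheory.volume 0 b :=
            hiu.mono_set (by rw [uIcc_of_le hb0, uIcc_of_le hu0]; exact Icc_subset_Icc le_rfl h'.le)
          have hibu : IntervalIntegrable g MeasureTheory.volume b u :=
            hiu.mono_set (by rw [uIcc_of_le h'.le, uIcc_of_le hu0]; exact Icc_subset_Icc hb0 le_rfl)
          have hsplit : (∫ τ in (0:ℝ)..u, g τ) = (∫ τ in (0:ℝ)..b, g τ) + ∫ τ in b..u, g τ :=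
            (intervalIntegral.integral_add_adjacent_intervals hib hibu).symm
          have h1 : 0 ≤ ∫ τ in (0:ℝ)..b, g τ := by
            apply intervalIntegral.integral_nonneg hb0
            intro v hv
            have := hgα v (hbB.2 v hv)
            linarith
          have h2 : 0 ≤ ∫ τ in b..u, g τ := by
            apply intervalIntegral.integral_nonneg h'.le
            intro v hv
            have := hIccsub ⟨hv.1, le_trans hv.2 hu.2⟩
            have : α/2 < g v := this
            linarith
          have := hineq' u (hsub ⟨hu0, hut₁⟩)
          rw [hsplit] at this
          linarith
      have : s ≤ b := by rw [hb_def]; exact le_csSup hBbdd hsB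
      linarith
    intro u hu
    exact hbB.2 u (by rw [hbeq]; exact hu)
  -- Step 2
  set F : ℝ → ℝ := fun s => y 0 + ∫ τ in (0:ℝ)..s, g τ with hF_def
  clear_value F
  have hgα' : ∀ u ∈ Icc (0:ℝ) t₁, α ≤ g u := fun u hu => hgα u (claim1 u hu)
  have hFlow : ∀ s ∈ Icc (0:ℝ) t₁, y 0 + α * s ≤ F s := by
    intro s hs
    have hc : α * s ≤ ∫ τ in (0:ℝ)..s, g τ := by
      have h0 : (∫ _ in (0:ℝ)..s, α) = α * s := by
        simp [intervalIntegral.integral_const]; ring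
      rw [← h0]
      exact intervalIntegral.integral_mono_on hs.1 intervalIntegrable_const (hgi s hs)
        (fun u hu => hgα' u ⟨hu.1, le_trans hu.2 hs.2⟩)
    simp only [hF_def]; linarith
  have hy0le : ∀ s ∈ Icc (0:ℝ) t₁, y 0 ≤ F s := by
    intro s hs
    have := hFlow s hs
    nlinarith [hs.1]
  have hFpos : ∀ s ∈ Icc (0:ℝ) t₁, 0 < F s := fun s hs => lt_of_lt_of_le hy0 (hy0le s hs)
  have hFy : ∀ s ∈ Icc (0:ℝ) t₁, F s ≤ y s := fun s hs => by
    simp only [hF_def]; exact hineq' s (hsub hs)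
  have hy0p : 0 < y 0 ^ p := Real.rpow_pos_of_pos hy0 p
  have hkey : ∀ s ∈ Icc (0:ℝ) t₁, α / y 0 ^ p * F s ^ p ≤ g s := by
    intro s hs
    have hFs := hFpos s hs
    have h1 : F s ^ p ≤ y s ^ p := Real.rpow_le_rpow hFs.le (hFy s hs) hp.le
    have h3 : y 0 ^ p ≤ F s ^ p := Real.rpow_le_rpow hy0.le (hy0le s hs) hp.le
    have h4 : C₁ ≤ C₁ / y 0 ^ p * F s ^ p := by
      rw [div_mul_eq_mul_div, le_div_iff₀ hy0p]; nlinarith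
    have h5 : α / y 0 ^ p = C₂ - C₁ / y 0 ^ p := by
      rw [hα]; field_simp
    simp only [hg_def]
    rw [h5]
    nlinarith
  have hFderiv : ∀ x ∈ Ioo (0:ℝ) t₁, HasDerivAt F (g x) x := by
    intro x hx
    have hxI : x ∈ Ioo (0:ℝ) T := ⟨hx.1, lt_trans hx.2 ht₁mem.2⟩
    have h1 : IntervalIntegrable g MeasureTheory.volume 0 x := hgi x ⟨hx.1.le, hx.2.le⟩
    have h2 : StronglyMeasurableAtFilter g (nhds x) MeasureTheory.volume :=
      (hgcont.mono Ioo_subset_Ico_self).stronglyMeasurableAtFilter isOpen_Ioo x hxI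
    have h3 : ContinuousAt g x :=
      (hgcont.mono Ioo_subset_Ico_self).continuousAt (Ioo_mem_nhds hxI.1 hxI.2)
    simp only [hF_def]
    exact (intervalIntegral.integral_hasDerivAt_right h1 h2 h3).const_add (y 0)
  set c := θ * α / y 0 ^ p with hc_def
  clear_value c
  have hcpos : 0 < c := by rw [hc_def]; positivity
  set ψ : ℝ → ℝ := fun s => F s ^ (-θ) + c * s with hψ_def
  clear_value ψ
  have hψderiv : ∀ x ∈ Ioo (0:ℝ) t₁,
      HasDerivAt ψ (g x * (-θ) * F x ^ (-θ - 1) + c) x := by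
    intro x hx
    have h1 := (hFderiv x hx).rpow_const (p := -θ) (Or.inl (hFpos x ⟨hx.1.le, hx.2.le⟩).ne')
    have h2 : HasDerivAt (fun s : ℝ => c * s) c x := by
      simpa using (hasDerivAt_id x).const_mul c
    simp only [hψ_def]
    exact h1.add h2
  have hψd_nonpos : ∀ x ∈ Ioo (0:ℝ) t₁, g x * (-θ) * F x ^ (-θ - 1) + c ≤ 0 := by
    intro x hx
    have hxm : x ∈ Icc (0:ℝ) t₁ := ⟨hx.1.le, hx.2.le⟩
    have hF := hFpos x hxm
    have hk := hkey x hxm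
    have hFnegpow : 0 < F x ^ (-θ - 1) := Real.rpow_pos_of_pos hF _
    have hid : F x ^ p * F x ^ (-θ - 1) = 1 := by
      rw [← Real.rpow_add hF, hp_def, show (1 + θ) + (-θ - 1) = 0 by ring, Real.rpow_zero]
    have hmul : α / y 0 ^ p * F x ^ p * F x ^ (-θ-1) ≤ g x * F x ^ (-θ-1) :=
      mul_le_mul_of_nonneg_right hk hFnegpow.le
    have h6 : α / y 0 ^ p * (F x ^ p * F x ^ (-θ - 1)) ≤ g x * F x ^ (-θ - 1) := by
      rw [← mul_assoc]; exact hmul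
    rw [hid, mul_one] at h6
    have h7 := mul_le_mul_of_nonneg_left h6 hθ.le
    rw [hc_def, mul_div_assoc]
    set X := F x ^ (-θ - 1) with hX
    set A := g x with hA
    set d := α / y 0 ^ p with hd
    nlinarith [h7]
  have hFc : ContinuousOn F (Icc 0 t₁) := by
    simp only [hF_def]
    apply continuousOn_const.add
    have hInt : MeasureTheory.IntegrableOn g (uIcc 0 t₁) MeasureTheory.volume := by
      rw [uIcc_of_le ht₁pos.le]
      exact (intervalIntegrable_iff_integrableOn_Icc_of_le ht₁pos.le).mp (hgi t₁ ⟨ht₁pos.le, le_rfl⟩)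
    have := intervalIntegral.continuousOn_primitive_interval hInt
    rwa [uIcc_of_le ht₁pos.le] at this
  have hψc : ContinuousOn ψ (Icc 0 t₁) := by
    simp only [hψ_def]
    apply ContinuousOn.add
    · exact fun s hs => (hFc s hs).rpow_const (Or.inl (hFpos s hs).ne')
    · exact (continuous_const.mul continuous_id).continuousOn
  have hanti : AntitoneOn ψ (Icc 0 t₁) := by
    apply antitoneOn_of_deriv_nonpos (convex_Icc 0 t₁) hψc
    · intro x hx
      rw [interior_Icc] at hx
      exact (hψderiv x hx).differentiableAt.differentiableWithinAt
    · intro x hx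
      rw [interior_Icc] at hx
      rw [(hψderiv x hx).deriv]
      exact hψd_nonpos x hx
  have hψ0 : ψ 0 = y 0 ^ (-θ) := by
    simp [hψ_def, hF_def]
  have hψt₁ : ψ t₁ ≤ ψ 0 := hanti ⟨le_rfl, ht₁pos.le⟩ ⟨ht₁pos.le, le_rfl⟩ ht₁pos.le
  have hFt₁pow : 0 < F t₁ ^ (-θ) := Real.rpow_pos_of_pos (hFpos t₁ ⟨ht₁pos.le, le_rfl⟩) _
  have hq : c * t₁ < y 0 ^ (-θ) := by
    rw [hψ0] at hψt₁
    simp only [hψ_def] at hψt₁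
    linarith
  have hy0id : y 0 ^ (-θ) * y 0 ^ p = y 0 := by
    rw [← Real.rpow_add hy0, hp_def, show -θ + (1 + θ) = 1 by ring, Real.rpow_one]
  have hfin : θ * α * t₁ < y 0 := by
    have := mul_lt_mul_of_pos_right hq hy0p
    rw [hy0id] at this
    rw [hc_def] at this
    calc θ * α * t₁ = θ * α / y 0 ^ p * t₁ * y 0 ^ p := by field_simp
    _ < y 0 := this
  have hgt : y 0 < t₁ * (α * θ) := (div_lt_iff₀ (mul_pos hαpos hθ)).mp ht₁gt
  nlinarith
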